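/- Let ψ(s) = γs + (σ²/2)s² + ∫_{(0,∞)} (e^{−sz} − 1 + sz·1_{z≤1}) ν(dz) be the Laplace exponent of a spectrally positive Lévy process and suppose p ∈ (0,∞) satisfies ψ(p) = 0. Define π(y) := ∫_{(y,∞)} e^{p(y−z)} ν(dz) for y > 0 and Π̄(z) := ∫_z^∞ π(y) dy. Then for every s > 0 with s ≠ p: ψ(s)/(s−p) = (σ²/2)s + ∫_0^∞ (1 − e^{−sy}) π(y) dy = s ( σ²/2 + ∫_0^∞ e^{−sz} Π̄(z) dz ), all integrals being finite. -/

import Mathlib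

open MeasureTheory Set
open scoped ENNReal

/-!
Since `ψ(p) = 0`, we may subtract `(s/p) ψ(p)` from `ψ(s)`: the drift and the compensating terms
`t z 1_{z ≤ 1}` cancel, and `ψ(s)/(s-p)` becomes `(σ²/2) s` plus the `ν`-integral of
`((e^{-sz} - 1) - (s/p)(e^{-pz} - 1))/(s-p)`. That integrand is `∫_0^z (1 - e^{-sy}) e^{p(y-z)} dy`,
so Tonelli on the triangle `0 < y < z` turns the `ν`-integral into `∫_0^∞ (1 - e^{-sy}) π(y) dy`.
Writing `(1 - e^{-sy})/s = ∫_0^y e^{-sz} dz` and applying Tonelli once more gives the `Π̄` form.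
All integrands are nonnegative, so both exchanges are done in `ℝ≥0∞`; finiteness is inherited from
the integrability of the compensated exponentials against `ν`, which is where `∫ 1 ∧ z² dν < ∞`
enters.
-/

theorem lintegral_lintegral_Ioi_swap {μ ν : Measure ℝ} [SFinite μ] [SFinite ν]
    {F : ℝ → ℝ → ℝ≥0∞} (hF : AEMeasurable (Function.uncurry F) (μ.prod ν)) :
    ∫⁻ x, ∫⁻ y in Ioi x, F x y ∂ν ∂μ = ∫⁻ y, ∫⁻ x in Iio y, F x y ∂μ ∂ν := by
  simp_rw [← lintegral_indicator measurableSet_Ioi, ← lintegral_indicator measurableSet_Iio]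
  exact lintegral_lintegral_swap
    (f := fun x y => {q : ℝ × ℝ | q.1 < q.2}.indicator (Function.uncurry F) (x, y))
    (hF.indicator (measurableSet_lt measurable_fst measurable_snd))

theorem aestronglyMeasurable_setIntegral_Ioi {E : Type*} [NormedAddCommGroup E] [NormedSpace ℝ E]
    {μ ν : Measure ℝ} [SFinite ν] {f : ℝ → ℝ → E}
    (hf : AEStronglyMeasurable (Function.uncurry f) (μ.prod ν)) :
    AEStronglyMeasurable (fun x => ∫ y in Ioi x, f x y ∂ν) μ := by
  simp_rw [← integral_indicator measurableSet_Ioi]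
  exact (hf.indicator (measurableSet_lt measurable_fst measurable_snd)).integral_prod_right'

theorem integrable_and_integral_eq_of_lintegral_ofReal_eq {α β : Type*} [MeasurableSpace α]
    [MeasurableSpace β] {μ : Measure α} {ν : Measure β} {f : α → ℝ} {g : β → ℝ}
    (hf₀ : 0 ≤ᵐ[μ] f) (hf : AEStronglyMeasurable f μ) (hg₀ : 0 ≤ᵐ[ν] g) (hg : Integrable g ν)
    (h : ∫⁻ x, ENNReal.ofReal (f x) ∂μ = ∫⁻ y, ENNReal.ofReal (g y) ∂ν) :
    Integrable f μ ∧ ∫ x, f x ∂μ = ∫ y, g y ∂ν :=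
  ⟨⟨hf, (hasFiniteIntegral_iff_ofReal hf₀).2 (h ▸ hg.lintegral_lt_top)⟩, by
    rw [integral_eq_lintegral_of_nonneg_ae hf₀ hf, integral_eq_lintegral_of_nonneg_ae hg₀ hg.1, h]⟩

theorem integral_Ioo_eq_sub_of_hasDerivAt {f f' : ℝ → ℝ} {a b : ℝ} (hab : a ≤ b)
    (hf : ∀ x, HasDerivAt f (f' x) x) (hf' : Continuous f') :
    ∫ x in Ioo a b, f' x = f b - f a := by
  rw [← integral_Ioc_eq_integral_Ioo, ← intervalIntegral.integral_of_le hab,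
    intervalIntegral.integral_eq_sub_of_hasDerivAt (fun x _ => hf x) (hf'.intervalIntegrable a b)]

namespace SpectrallyPositiveLevy

noncomputable section

def compensatedExp (t z : ℝ) : ℝ :=
  Real.exp (-(t * z)) - 1 + t * z * (if z ≤ 1 then 1 else 0)

def laplaceExponent (b σ : ℝ) (ν : Measure ℝ) (s : ℝ) : ℝ :=
  b * s + σ ^ 2 / 2 * s ^ 2 + ∫ z in Ioi 0, compensatedExp s z ∂ν

/-- The `ν`-integrand of `ψ(s)/(s-p)` once `ψ(p) = 0` has been used. -/
def quotientIntegrand (p s z : ℝ) : ℝ :=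
  (Real.exp (-(s * z)) - 1 - s / p * (Real.exp (-(p * z)) - 1)) / (s - p)

def ladderDensity (ν : Measure ℝ) (p y : ℝ) : ℝ :=
  ∫ z in Ioi y, Real.exp (p * (y - z)) ∂ν

def ladderTail (ν : Measure ℝ) (p z : ℝ) : ℝ :=
  ∫ y in Ioi z, ladderDensity ν p y

section LevyMeasure

variable {ν : Measure ℝ}

theorem measure_Ioi_lt_top_of_lintegral_min_sq
    (hν : ∫⁻ z in Ioi 0, ENNReal.ofReal (min 1 (z ^ 2)) ∂ν < ∞) {a : ℝ} (ha : 0 < a) :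
    ν (Ioi a) < ∞ := by
  have hle : ENNReal.ofReal (min 1 (a ^ 2)) * ν (Ioi a)
      ≤ ∫⁻ z in Ioi 0, ENNReal.ofReal (min 1 (z ^ 2)) ∂ν :=
    calc ENNReal.ofReal (min 1 (a ^ 2)) * ν (Ioi a)
        = ∫⁻ _ in Ioi a, ENNReal.ofReal (min 1 (a ^ 2)) ∂ν := by
          rw [setLIntegral_const, mul_comm]
      _ ≤ ∫⁻ z in Ioi a, ENNReal.ofReal (min 1 (z ^ 2)) ∂ν :=
          setLIntegral_mono (by fun_prop) fun z hz =>
            ENNReal.ofReal_le_ofReal (min_le_min_left 1 (pow_le_pow_left₀ ha.le (le_of_lt hz) 2))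
      _ ≤ _ := lintegral_mono_set (Ioi_subset_Ioi ha.le)
  exact ENNReal.lt_top_of_mul_ne_top_right (hle.trans_lt hν).ne (by positivity)

/-- `ν` restricted to `(0, ∞)` is the finite measure `min 1 z² · ν` reweighted by a density. -/
theorem sFinite_restrict_Ioi_of_lintegral_min_sq
    (hν : ∫⁻ z in Ioi 0, ENNReal.ofReal (min 1 (z ^ 2)) ∂ν < ∞) :
    SFinite (ν.restrict (Ioi 0)) := by
  have hw : Measurable fun z : ℝ => ENNReal.ofReal (min 1 (z ^ 2)) := by fun_prop
  have : IsFiniteMeasure ((ν.restrict (Ioi 0)).withDensity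
      fun z => ENNReal.ofReal (min 1 (z ^ 2))) := isFiniteMeasure_withDensity hν.ne
  rw [← withDensity_inv_same hw
    (ae_restrict_of_forall_mem measurableSet_Ioi fun z (hz : 0 < z) => by positivity)
    (ae_of_all _ fun _ => ENNReal.ofReal_ne_top)]
  infer_instance

theorem exp_neg_sub_one_add_le_sq {x : ℝ} (hx : 0 ≤ x) : Real.exp (-x) - 1 + x ≤ x ^ 2 := by
  have h : Real.exp (-x) * (x + 1) ≤ 1 := by
    calc Real.exp (-x) * (x + 1) ≤ Real.exp (-x) * Real.exp x :=
          mul_le_mul_of_nonneg_left (by linarith [Real.add_one_le_exp x]) (Real.exp_pos _).le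
      _ = 1 := by rw [← Real.exp_add, neg_add_cancel, Real.exp_zero]
  nlinarith [pow_nonneg hx 3, Real.exp_pos (-x)]

theorem abs_compensatedExp_le {t z : ℝ} (ht : 0 ≤ t) (hz : 0 ≤ z) :
    |compensatedExp t z| ≤ max 1 (t ^ 2) * min 1 (z ^ 2) := by
  have htz : 0 ≤ t * z := mul_nonneg ht hz
  unfold compensatedExp
  split_ifs with h1
  · have hlb : 0 ≤ Real.exp (-(t * z)) - 1 + t * z := by
      linarith [Real.add_one_le_exp (-(t * z))]
    rw [mul_one, abs_of_nonneg hlb, min_eq_right (by nlinarith)]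
    calc Real.exp (-(t * z)) - 1 + t * z ≤ t ^ 2 * z ^ 2 := by
          rw [← mul_pow]; exact exp_neg_sub_one_add_le_sq htz
      _ ≤ max 1 (t ^ 2) * z ^ 2 := by gcongr; exact le_max_right _ _
  · rw [mul_zero, add_zero, min_eq_left (by nlinarith), mul_one, abs_le]
    have h2 : Real.exp (-(t * z)) ≤ 1 := Real.exp_le_one_iff.2 (by linarith)
    have h3 := le_max_left 1 (t ^ 2)
    constructor <;> linarith [Real.exp_pos (-(t * z))]

theorem integrable_compensatedExp
    (hν : ∫⁻ z in Ioi 0, ENNReal.ofReal (min 1 (z ^ 2)) ∂ν < ∞) {t : ℝ} (ht : 0 ≤ t) :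
    Integrable (compensatedExp t) (ν.restrict (Ioi 0)) := by
  have hmin : Integrable (fun z : ℝ => min 1 (z ^ 2)) (ν.restrict (Ioi 0)) :=
    ⟨(by fun_prop : Measurable fun z : ℝ => min 1 (z ^ 2)).aestronglyMeasurable,
      (hasFiniteIntegral_iff_ofReal (ae_of_all _ fun z => by positivity)).2 hν⟩
  refine (hmin.const_mul (max 1 (t ^ 2))).mono' ?_ ?_
  · refine Measurable.aestronglyMeasurable ?_
    unfold compensatedExp
    exact (by fun_prop : Measurable fun z : ℝ => Real.exp (-(t * z)) - 1).add
      ((by fun_prop : Measurable fun z : ℝ => t * z).mul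
        (Measurable.ite measurableSet_Iic measurable_const measurable_const))
  · filter_upwards [ae_restrict_mem measurableSet_Ioi] with z (hz : 0 < z)
    exact abs_compensatedExp_le ht hz.le

theorem quotientIntegrand_eq {p : ℝ} (hp : p ≠ 0) (s z : ℝ) :
    quotientIntegrand p s z = (compensatedExp s z - s / p * compensatedExp p z) / (s - p) := by
  unfold quotientIntegrand compensatedExp
  congr 1
  field_simp
  ring

theorem laplaceExponent_div_sub_eq
    (hν : ∫⁻ z in Ioi 0, ENNReal.ofReal (min 1 (z ^ 2)) ∂ν < ∞) {b σ p s : ℝ} (hp : 0 < p)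
    (hs : 0 ≤ s) (hsp : s ≠ p) (h₀ : laplaceExponent b σ ν p = 0) :
    laplaceExponent b σ ν s / (s - p) =
      σ ^ 2 / 2 * s + ∫ z in Ioi 0, quotientIntegrand p s z ∂ν := by
  have hIs := integrable_compensatedExp hν hs
  have hIp := integrable_compensatedExp hν hp.le
  simp only [quotientIntegrand_eq hp.ne']
  rw [integral_div, integral_sub hIs (hIp.const_mul _), integral_const_mul]
  unfold laplaceExponent at h₀ ⊢
  have hsp' : s - p ≠ 0 := sub_ne_zero.2 hsp
  rw [show ∫ z in Ioi 0, compensatedExp p z ∂ν = -(b * p + σ ^ 2 / 2 * p ^ 2) by linarith]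
  field_simp
  ring

end LevyMeasure

theorem one_sub_exp_neg_mul_nonneg {s y : ℝ} (hs : 0 ≤ s) (hy : 0 ≤ y) :
    0 ≤ 1 - Real.exp (-(s * y)) :=
  sub_nonneg.2 (Real.exp_le_one_iff.2 (neg_nonpos.2 (mul_nonneg hs hy)))

theorem integral_Ioo_exp_neg_mul {s y : ℝ} (hs : s ≠ 0) (hy : 0 ≤ y) :
    ∫ z in Ioo 0 y, Real.exp (-(s * z)) = (1 - Real.exp (-(s * y))) / s := by
  have hG : ∀ z, HasDerivAt (fun z => -Real.exp (-(s * z)) / s) (Real.exp (-(s * z))) z := by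
    intro z
    have h : HasDerivAt (fun y => -(s * y)) (-s) z := by
      simpa using (hasDerivAt_id' z).const_mul (-s)
    exact (h.exp.neg.div_const s).congr_deriv (by field_simp)
  rw [integral_Ioo_eq_sub_of_hasDerivAt hy hG (by fun_prop), mul_zero, neg_zero, Real.exp_zero]
  ring

theorem integral_Ioo_one_sub_exp_mul_exp {p s z : ℝ} (hp : p ≠ 0) (hsp : s ≠ p) (hz : 0 ≤ z) :
    ∫ y in Ioo 0 z, (1 - Real.exp (-(s * y))) * Real.exp (p * (y - z)) =
      quotientIntegrand p s z := by
  have hps : p - s ≠ 0 := sub_ne_zero.2 hsp.symm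
  have hG : ∀ y, HasDerivAt
      (fun y => Real.exp (p * (y - z)) * (1 / p - Real.exp (-(s * y)) / (p - s)))
      ((1 - Real.exp (-(s * y))) * Real.exp (p * (y - z))) y := by
    intro y
    have h₁ : HasDerivAt (fun y => p * (y - z)) p y := by
      simpa using ((hasDerivAt_id' y).sub_const z).const_mul p
    have h₂ : HasDerivAt (fun y => -(s * y)) (-s) y := by
      simpa using (hasDerivAt_id' y).const_mul (-s)
    exact (h₁.exp.mul ((h₂.exp.div_const (p - s)).const_sub (1 / p))).congr_deriv
      (by field_simp; ring)
  rw [integral_Ioo_eq_sub_of_hasDerivAt hz hG (by fun_prop), quotientIntegrand]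
  simp only [sub_self, mul_zero, neg_zero, Real.exp_zero, zero_sub, mul_neg]
  field_simp
  ring

theorem quotientIntegrand_nonneg {p s z : ℝ} (hp : p ≠ 0) (hs : 0 ≤ s) (hsp : s ≠ p)
    (hz : 0 ≤ z) : 0 ≤ quotientIntegrand p s z := by
  rw [← integral_Ioo_one_sub_exp_mul_exp hp hsp hz]
  exact setIntegral_nonneg measurableSet_Ioo fun y hy =>
    mul_nonneg (one_sub_exp_neg_mul_nonneg hs hy.1.le) (Real.exp_nonneg _)

section Ladder

variable {ν : Measure ℝ} {p : ℝ}

theorem ladderDensity_nonneg (y : ℝ) : 0 ≤ ladderDensity ν p y :=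
  integral_nonneg fun _ => Real.exp_nonneg _

theorem integrableOn_exp_mul_sub_Ioi (hp : 0 ≤ p) {y : ℝ} (hy : ν (Ioi y) < ∞) :
    IntegrableOn (fun z => Real.exp (p * (y - z))) (Ioi y) ν :=
  Measure.integrableOn_of_bounded hy.ne (by fun_prop) (M := 1) <|
    ae_restrict_of_forall_mem measurableSet_Ioi fun z (hz : y < z) => by
      rw [Real.norm_of_nonneg (Real.exp_nonneg _), Real.exp_le_one_iff]
      exact mul_nonpos_of_nonneg_of_nonpos hp (by linarith)

theorem ofReal_mul_ladderDensity (hp : 0 ≤ p) {c y : ℝ} (hc : 0 ≤ c) (hy : ν (Ioi y) < ∞) :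
    ENNReal.ofReal (c * ladderDensity ν p y) =
      ∫⁻ z in Ioi y, ENNReal.ofReal (c * Real.exp (p * (y - z))) ∂ν := by
  rw [ladderDensity, ← integral_const_mul, ofReal_integral_eq_lintegral_ofReal
    ((integrableOn_exp_mul_sub_Ioi hp hy).const_mul c)
    (ae_of_all _ fun _ => mul_nonneg hc (Real.exp_nonneg _))]

theorem aestronglyMeasurable_ladderDensity {a : ℝ} [SFinite (ν.restrict (Ioi a))] :
    AEStronglyMeasurable (ladderDensity ν p) (volume.restrict (Ioi a)) :=
  (aestronglyMeasurable_setIntegral_Ioi (ν := ν.restrict (Ioi a))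
    (f := fun y z => Real.exp (p * (y - z))) (by fun_prop)).congr <|
    ae_restrict_of_forall_mem measurableSet_Ioi fun y (hy : a < y) => by
      simp only [ladderDensity, Measure.restrict_restrict_of_subset (Ioi_subset_Ioi hy.le)]

theorem aestronglyMeasurable_ladderTail {a : ℝ} [SFinite (ν.restrict (Ioi a))] :
    AEStronglyMeasurable (ladderTail ν p) (volume.restrict (Ioi a)) :=
  (aestronglyMeasurable_setIntegral_Ioi (ν := volume.restrict (Ioi a))
    (f := fun _ y => ladderDensity ν p y) aestronglyMeasurable_ladderDensity.comp_snd).congr <|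
    ae_restrict_of_forall_mem measurableSet_Ioi fun z (hz : a < z) => by
      simp only [ladderTail, Measure.restrict_restrict_of_subset (Ioi_subset_Ioi hz.le)]

variable (hν : ∫⁻ z in Ioi 0, ENNReal.ofReal (min 1 (z ^ 2)) ∂ν < ∞)
include hν

theorem lintegral_one_sub_exp_mul_ladderDensity (hp : 0 < p) {s : ℝ} (hs : 0 ≤ s)
    (hsp : s ≠ p) :
    ∫⁻ y in Ioi 0, ENNReal.ofReal ((1 - Real.exp (-(s * y))) * ladderDensity ν p y) =
      ∫⁻ z in Ioi 0, ENNReal.ofReal (quotientIntegrand p s z) ∂ν := by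
  have := sFinite_restrict_Ioi_of_lintegral_min_sq hν
  have hF : AEMeasurable (Function.uncurry fun y z : ℝ =>
      ENNReal.ofReal ((1 - Real.exp (-(s * y))) * Real.exp (p * (y - z))))
      ((volume.restrict (Ioi 0)).prod (ν.restrict (Ioi 0))) :=
    (Continuous.measurable (by fun_prop)).ennreal_ofReal.aemeasurable
  calc ∫⁻ y in Ioi 0, ENNReal.ofReal ((1 - Real.exp (-(s * y))) * ladderDensity ν p y)
      = ∫⁻ y in Ioi 0, ∫⁻ z in Ioi y,
          ENNReal.ofReal ((1 - Real.exp (-(s * y))) * Real.exp (p * (y - z))) ∂ν.restrict (Ioi 0) :=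
        setLIntegral_congr_fun measurableSet_Ioi fun y (hy : 0 < y) => by
          rw [Measure.restrict_restrict_of_subset (Ioi_subset_Ioi hy.le),
            ofReal_mul_ladderDensity hp.le (one_sub_exp_neg_mul_nonneg hs hy.le)
              (measure_Ioi_lt_top_of_lintegral_min_sq hν hy)]
    _ = ∫⁻ z in Ioi 0, ∫⁻ y in Iio z,
          ENNReal.ofReal ((1 - Real.exp (-(s * y))) * Real.exp (p * (y - z)))
          ∂volume.restrict (Ioi 0) ∂ν :=
        lintegral_lintegral_Ioi_swap hF
    _ = ∫⁻ z in Ioi 0, ENNReal.ofReal (quotientIntegrand p s z) ∂ν :=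
        setLIntegral_congr_fun measurableSet_Ioi fun z (hz : 0 < z) => by
          rw [Measure.restrict_restrict measurableSet_Iio, Iio_inter_Ioi,
            ← integral_Ioo_one_sub_exp_mul_exp hp.ne' hsp hz.le,
            ofReal_integral_eq_lintegral_ofReal
              ((Continuous.integrableOn_Icc (by fun_prop)).mono_set Ioo_subset_Icc_self)]
          exact ae_restrict_of_forall_mem measurableSet_Ioo fun y hy =>
            mul_nonneg (one_sub_exp_neg_mul_nonneg hs hy.1.le) (Real.exp_nonneg _)

theorem integrableOn_and_integral_one_sub_exp_mul_ladderDensity (hp : 0 < p) {s : ℝ}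
    (hs : 0 ≤ s) (hsp : s ≠ p) :
    IntegrableOn (fun y => (1 - Real.exp (-(s * y))) * ladderDensity ν p y) (Ioi 0) ∧
      ∫ y in Ioi 0, (1 - Real.exp (-(s * y))) * ladderDensity ν p y =
        ∫ z in Ioi 0, quotientIntegrand p s z ∂ν := by
  have := sFinite_restrict_Ioi_of_lintegral_min_sq hν
  have hg : Integrable (quotientIntegrand p s) (ν.restrict (Ioi 0)) := by
    simp only [funext (quotientIntegrand_eq hp.ne' s)]
    exact ((integrable_compensatedExp hν hs).sub
      ((integrable_compensatedExp hν hp.le).const_mul _)).div_const _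
  refine integrable_and_integral_eq_of_lintegral_ofReal_eq ?_
    ((by fun_prop : Continuous fun y => 1 - Real.exp (-(s * y))).aestronglyMeasurable.mul
      aestronglyMeasurable_ladderDensity)
    ?_ hg (lintegral_one_sub_exp_mul_ladderDensity hν hp hs hsp)
  · exact ae_restrict_of_forall_mem measurableSet_Ioi fun y (hy : 0 < y) =>
      mul_nonneg (one_sub_exp_neg_mul_nonneg hs hy.le) (ladderDensity_nonneg y)
  · exact ae_restrict_of_forall_mem measurableSet_Ioi fun z (hz : 0 < z) =>
      quotientIntegrand_nonneg hp.ne' hs hsp hz.le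

/-- On `(z, ∞)` the weight `1 - e^{-(p+1) y}` is bounded below by `1 - e^{-(p+1) z} > 0`. -/
theorem integrableOn_ladderDensity_Ioi (hp : 0 < p) {z : ℝ} (hz : 0 < z) :
    IntegrableOn (ladderDensity ν p) (Ioi z) := by
  have := sFinite_restrict_Ioi_of_lintegral_min_sq hν
  set q := p + 1
  have hq : 0 < q := by positivity
  have hc : 0 < 1 - Real.exp (-(q * z)) := by
    linarith [Real.exp_lt_one_iff.2 (neg_lt_zero.2 (mul_pos hq hz))]
  have hweighted := ((integrableOn_and_integral_one_sub_exp_mul_ladderDensity hν hp hq.le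
    (by simp [q])).1.mono_set (Ioi_subset_Ioi hz.le)).const_mul (1 - Real.exp (-(q * z)))⁻¹
  refine hweighted.mono' (aestronglyMeasurable_ladderDensity.mono_measure
    (Measure.restrict_mono (Ioi_subset_Ioi hz.le) le_rfl)) ?_
  refine ae_restrict_of_forall_mem measurableSet_Ioi fun y (hy : z < y) => ?_
  rw [Real.norm_of_nonneg (ladderDensity_nonneg y), ← mul_assoc]
  refine le_mul_of_one_le_left (ladderDensity_nonneg y) ((one_le_inv_mul₀ hc).2 ?_)
  linarith [Real.exp_le_exp.2 (neg_le_neg (mul_le_mul_of_nonneg_left hy.le hq.le))]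

theorem lintegral_exp_mul_ladderTail (hp : 0 < p) {s : ℝ} (hs : 0 < s) :
    ∫⁻ z in Ioi 0, ENNReal.ofReal (Real.exp (-(s * z)) * ladderTail ν p z) =
      ∫⁻ y in Ioi 0, ENNReal.ofReal ((1 - Real.exp (-(s * y))) * ladderDensity ν p y / s) := by
  have := sFinite_restrict_Ioi_of_lintegral_min_sq hν
  have hF : AEMeasurable (Function.uncurry fun z y : ℝ =>
      ENNReal.ofReal (Real.exp (-(s * z)) * ladderDensity ν p y))
      ((volume.restrict (Ioi 0)).prod (volume.restrict (Ioi 0))) :=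
    (((by fun_prop : Continuous fun z : ℝ => Real.exp (-(s * z))).aestronglyMeasurable.comp_fst).mul
      aestronglyMeasurable_ladderDensity.comp_snd).aemeasurable.ennreal_ofReal
  calc ∫⁻ z in Ioi 0, ENNReal.ofReal (Real.exp (-(s * z)) * ladderTail ν p z)
      = ∫⁻ z in Ioi 0, ∫⁻ y in Ioi z, ENNReal.ofReal (Real.exp (-(s * z)) * ladderDensity ν p y)
          ∂volume.restrict (Ioi 0) :=
        setLIntegral_congr_fun measurableSet_Ioi fun z (hz : 0 < z) => by
          rw [Measure.restrict_restrict_of_subset (Ioi_subset_Ioi hz.le), ladderTail,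
            ← integral_const_mul, ofReal_integral_eq_lintegral_ofReal
              ((integrableOn_ladderDensity_Ioi hν hp hz).const_mul _)
              (ae_of_all _ fun y => mul_nonneg (Real.exp_nonneg _) (ladderDensity_nonneg y))]
    _ = ∫⁻ y in Ioi 0, ∫⁻ z in Iio y, ENNReal.ofReal (Real.exp (-(s * z)) * ladderDensity ν p y)
          ∂volume.restrict (Ioi 0) :=
        lintegral_lintegral_Ioi_swap hF
    _ = ∫⁻ y in Ioi 0, ENNReal.ofReal ((1 - Real.exp (-(s * y))) * ladderDensity ν p y / s) :=
        setLIntegral_congr_fun measurableSet_Ioi fun y (hy : 0 < y) => by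
          rw [Measure.restrict_restrict measurableSet_Iio, Iio_inter_Ioi,
            ← ofReal_integral_eq_lintegral_ofReal
              ((Continuous.integrableOn_Icc (by fun_prop : Continuous fun z =>
                Real.exp (-(s * z)) * ladderDensity ν p y)).mono_set Ioo_subset_Icc_self)
              (ae_of_all _ fun z => mul_nonneg (Real.exp_nonneg _) (ladderDensity_nonneg y)),
            integral_mul_const, integral_Ioo_exp_neg_mul hs.ne' hy.le, div_mul_eq_mul_div]

theorem integrableOn_and_integral_exp_mul_ladderTail (hp : 0 < p) {s : ℝ} (hs : 0 < s)
    (hsp : s ≠ p) :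
    IntegrableOn (fun z => Real.exp (-(s * z)) * ladderTail ν p z) (Ioi 0) ∧
      ∫ z in Ioi 0, Real.exp (-(s * z)) * ladderTail ν p z =
        (∫ y in Ioi 0, (1 - Real.exp (-(s * y))) * ladderDensity ν p y) / s := by
  have := sFinite_restrict_Ioi_of_lintegral_min_sq hν
  rw [← integral_div]
  refine integrable_and_integral_eq_of_lintegral_ofReal_eq ?_
    ((by fun_prop : Continuous fun z => Real.exp (-(s * z))).aestronglyMeasurable.mul
      aestronglyMeasurable_ladderTail)
    ?_ ((integrableOn_and_integral_one_sub_exp_mul_ladderDensity hν hp hs.le hsp).1.div_const s)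
    (lintegral_exp_mul_ladderTail hν hp hs)
  · exact ae_of_all _ fun z => mul_nonneg (Real.exp_nonneg _)
      (setIntegral_nonneg measurableSet_Ioi fun y _ => ladderDensity_nonneg y)
  · exact ae_restrict_of_forall_mem measurableSet_Ioi fun y (hy : 0 < y) =>
      div_nonneg (mul_nonneg (one_sub_exp_neg_mul_nonneg hs.le hy.le) (ladderDensity_nonneg y))
        hs.le

end Ladder

end

end SpectrallyPositiveLevy

open SpectrallyPositiveLevy

theorem stmt_4_general (b σ : ℝ) (ν : Measure ℝ)
    (hν_int : ∫⁻ z in Ioi 0, ENNReal.ofReal (min 1 (z ^ 2)) ∂ν < ⊤)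
    (ψ : ℝ → ℝ)
    (hψ : ∀ s, 0 ≤ s → ψ s = b * s + σ ^ 2 / 2 * s ^ 2 +
      ∫ z in Ioi 0, (Real.exp (-(s * z)) - 1 + s * z * (if z ≤ 1 then 1 else 0)) ∂ν)
    (p : ℝ) (hp : 0 < p) (hψp : ψ p = 0)
    (pr : ℝ → ℝ)
    (hpr : ∀ y, 0 < y → pr y = ∫ z in Ioi y, Real.exp (p * (y - z)) ∂ν)
    (Pib : ℝ → ℝ)
    (hPib : ∀ z, 0 < z → Pib z = ∫ y in Ioi z, pr y) :
    ∀ s, 0 < s → s ≠ p →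
      (∀ y, 0 < y → IntegrableOn (fun z => Real.exp (p * (y - z))) (Ioi y) ν) ∧
      (∀ z, 0 < z → IntegrableOn pr (Ioi z)) ∧
      IntegrableOn (fun y => (1 - Real.exp (-(s * y))) * pr y) (Ioi 0) ∧
      IntegrableOn (fun z => Real.exp (-(s * z)) * Pib z) (Ioi 0) ∧
      ψ s / (s - p) = σ ^ 2 / 2 * s + ∫ y in Ioi 0, (1 - Real.exp (-(s * y))) * pr y ∧
      ψ s / (s - p) = s * (σ ^ 2 / 2 + ∫ z in Ioi 0, Real.exp (-(s * z)) * Pib z) := by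
  intro s hs hsp
  have hψ' : ∀ t, 0 ≤ t → ψ t = laplaceExponent b σ ν t := hψ
  have hpr' : EqOn pr (ladderDensity ν p) (Ioi 0) := fun y hy => hpr y hy
  have hPib' : EqOn Pib (ladderTail ν p) (Ioi 0) := fun z (hz : 0 < z) => by
    rw [hPib z hz, ladderTail]
    exact setIntegral_congr_fun measurableSet_Ioi fun y (hy : z < y) => hpr' (hz.trans hy)
  have hquot := laplaceExponent_div_sub_eq hν_int hp hs.le hsp (hψ' p hp.le ▸ hψp)
  rw [← hψ' s hs.le] at hquot
  obtain ⟨hint₁, heq₁⟩ :=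
    integrableOn_and_integral_one_sub_exp_mul_ladderDensity hν_int hp hs.le hsp
  obtain ⟨hint₂, heq₂⟩ := integrableOn_and_integral_exp_mul_ladderTail hν_int hp hs hsp
  have hJ : ∫ y in Ioi 0, (1 - Real.exp (-(s * y))) * pr y =
      ∫ y in Ioi 0, (1 - Real.exp (-(s * y))) * ladderDensity ν p y :=
    setIntegral_congr_fun measurableSet_Ioi fun y hy => by rw [hpr' hy]
  have hK : ∫ z in Ioi 0, Real.exp (-(s * z)) * Pib z =
      ∫ z in Ioi 0, Real.exp (-(s * z)) * ladderTail ν p z :=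
    setIntegral_congr_fun measurableSet_Ioi fun z hz => by rw [hPib' hz]
  refine ⟨fun y hy => integrableOn_exp_mul_sub_Ioi hp.le
      (measure_Ioi_lt_top_of_lintegral_min_sq hν_int hy),
    fun z hz => (integrableOn_ladderDensity_Ioi hν_int hp hz).congr_fun
      (hpr'.symm.mono (Ioi_subset_Ioi hz.le)) measurableSet_Ioi,
    hint₁.congr_fun (fun y hy => by rw [hpr' hy]) measurableSet_Ioi,
    hint₂.congr_fun (fun z hz => by rw [hPib' hz]) measurableSet_Ioi,
    by rw [hquot, hJ, heq₁], ?_⟩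
  rw [hquot, hK, heq₂, heq₁]
  field_simp

/-- With `ψ` the Laplace exponent of a spectrally positive Lévy process,
`p ∈ (0,∞)` a root of `ψ`, `π(y) := ∫_{(y,∞)} e^{p(y-z)} ν(dz)` and `Π̄(z) := ∫_z^∞ π(y)dy`,
for every `s > 0` with `s ≠ p` all the integrals below are finite and
`ψ(s)/(s-p) = (σ²/2)s + ∫_0^∞ (1-e^{-sy}) π(y) dy = s(σ²/2 + ∫_0^∞ e^{-sz} Π̄(z) dz)`. -/
theorem stmt_4 (b σ : ℝ) (hσ : 0 ≤ σ) (ν : Measure ℝ)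
    (hν_supp : ν (Iic 0) = 0)
    (hν_int : ∫⁻ z in Ioi 0, ENNReal.ofReal (min 1 (z ^ 2)) ∂ν < ⊤)
    (ψ : ℝ → ℝ)
    (hψ : ∀ s, 0 ≤ s → ψ s = b * s + σ ^ 2 / 2 * s ^ 2 +
      ∫ z in Ioi 0, (Real.exp (-(s * z)) - 1 + s * z * (if z ≤ 1 then 1 else 0)) ∂ν)
    (p : ℝ) (hp : 0 < p) (hψp : ψ p = 0)
    (pr : ℝ → ℝ)
    (hpr : ∀ y, 0 < y → pr y = ∫ z in Ioi y, Real.exp (p * (y - z)) ∂ν)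
    (Pib : ℝ → ℝ)
    (hPib : ∀ z, 0 < z → Pib z = ∫ y in Ioi z, pr y) :
    ∀ s, 0 < s → s ≠ p →
      (∀ y, 0 < y → IntegrableOn (fun z => Real.exp (p * (y - z))) (Ioi y) ν) ∧
      (∀ z, 0 < z → IntegrableOn pr (Ioi z)) ∧
      IntegrableOn (fun y => (1 - Real.exp (-(s * y))) * pr y) (Ioi 0) ∧
      IntegrableOn (fun z => Real.exp (-(s * z)) * Pib z) (Ioi 0) ∧
      ψ s / (s - p) = σ ^ 2 / 2 * s + ∫ y in Ioi 0, (1 - Real.exp (-(s * y))) * pr y ∧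
      ψ s / (s - p) = s * (σ ^ 2 / 2 + ∫ z in Ioi 0, Real.exp (-(s * z)) * Pib z) :=
  stmt_4_general b σ ν hν_int ψ hψ p hp hψp pr hpr Pib hPib
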